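/- arXiv:2411.18793 — 2 statements merged into one kernel-verified Lean document; each statement's English description precedes it below -/
import Mathlib

section
/- Williems' Fundamental Lemma (one direction, image inclusion): Let (A,B,C,D) be a controllable discrete-time LTI system of state dimension n, and let (u,y) with x be a trajectory on [0,T−1], i.e., x_{k+1} = A x_k + B u_k and y_k = C x_k + D u_k. If u is persistently exciting of order L + n, then for every length-L input-output trajectory (ū, ȳ) of the system there exists g ∈ ℝ^{T−L+1} such that H_L(u) g = ū and H_L(y) g = ȳ (stacking the input and output Hankel matrices). -/
open Matrix

def Hankel {T m : ℕ} (L : ℕ) (hL : L ≤ T) (u : Fin T → Fin m → ℝ) :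
    Matrix (Fin L × Fin m) (Fin (T - L + 1)) ℝ :=
  fun ik j => u ⟨ik.1 + j, by omega⟩ ik.2

def PersistentlyExciting {T m : ℕ} (L : ℕ) (hL : L ≤ T) (u : Fin T → Fin m → ℝ) : Prop :=
  (Hankel L hL u).rank = L * m

/-- `(u, y)` is a length-`L` input-output trajectory of the LTI system `(A,B,C,D)`:
there is a state sequence satisfying `x_{k+1} = A x_k + B u_k`, `y_k = C x_k + D u_k`. -/
def IsTraj {n m p : ℕ} (A : Matrix (Fin n) (Fin n) ℝ) (B : Matrix (Fin n) (Fin m) ℝ)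
    (C : Matrix (Fin p) (Fin n) ℝ) (D : Matrix (Fin p) (Fin m) ℝ)
    {L : ℕ} (u : Fin L → Fin m → ℝ) (y : Fin L → Fin p → ℝ) : Prop :=
  ∃ x : Fin (L + 1) → Fin n → ℝ,
    (∀ k : Fin L, x k.succ = A.mulVec (x k.castSucc) + B.mulVec (u k)) ∧
    (∀ k : Fin L, y k = C.mulVec (x k.castSucc) + D.mulVec (u k))

/-- Controllability: the controllability matrix `[B, AB, …, A^{n−1}B]` has rank `n`. -/
def Controllable {n m : ℕ} (A : Matrix (Fin n) (Fin n) ℝ) (B : Matrix (Fin n) (Fin m) ℝ) :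
    Prop :=
  (Matrix.of (fun (i : Fin n) (kj : Fin n × Fin m) => (A ^ (kj.1 : ℕ) * B) i kj.2)).rank = n

open Finset

private lemma surjMulVec {ι κ : Type*} [Fintype ι] [Fintype κ] [DecidableEq ι] [DecidableEq κ]
    (M : Matrix ι κ ℝ) (h : ∀ v : ι → ℝ, M.vecMul v = 0 → v = 0) :
    Function.Surjective M.mulVec := by
  have hker : LinearMap.ker Mᵀ.mulVecLin = ⊥ := by
    rw [LinearMap.ker_eq_bot']
    intro v hv
    exact h v (by rwa [Matrix.mulVecLin_apply, Matrix.mulVec_transpose] at hv)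
  have h3 := LinearMap.finrank_range_add_finrank_ker (Mᵀ.mulVecLin)
  rw [hker] at h3
  simp only [finrank_bot, Module.finrank_pi, add_zero] at h3
  have htop : LinearMap.range M.mulVecLin = ⊤ := by
    apply Submodule.eq_top_of_finrank_eq
    rw [show Module.finrank ℝ ↥(LinearMap.range M.mulVecLin) = M.rank from rfl,
      ← Matrix.rank_transpose, Module.finrank_pi]
    exact h3
  intro w
  obtain ⟨g, hg⟩ := LinearMap.range_eq_top.mp htop w
  exact ⟨g, by rw [← Matrix.mulVecLin_apply]; exact hg⟩

private lemma swapLin {α ι β : Type*} [Fintype α] [Fintype ι] [Fintype β]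
    (M : Matrix β α ℝ) (g : ι → ℝ) (v : ι → α → ℝ) (b : β) :
    ∑ j, g j * (M.mulVec (v j)) b = (M.mulVec (fun a => ∑ j, g j * v j a)) b := by
  simp only [Matrix.mulVec, dotProduct, Finset.mul_sum]
  rw [Finset.sum_comm]
  exact Finset.sum_congr rfl fun a _ => Finset.sum_congr rfl fun j _ => by ring
private lemma vecMulZero {ι κ : Type*} [Fintype ι] [Fintype κ] [DecidableEq ι] [DecidableEq κ]
    (M : Matrix ι κ ℝ) (h : M.rank = Fintype.card ι) {v : ι → ℝ} (hv : M.vecMul v = 0) :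
    v = 0 := by
  have h1 : Mᵀ.mulVecLin v = 0 := by
    rw [Matrix.mulVecLin_apply, Matrix.mulVec_transpose]; exact hv
  have h2 : Mᵀ.rank = Fintype.card ι := by rw [Matrix.rank_transpose]; exact h
  have h3 := LinearMap.finrank_range_add_finrank_ker (Mᵀ.mulVecLin)
  rw [show Module.finrank ℝ ↥(LinearMap.range Mᵀ.mulVecLin) = Mᵀ.rank from rfl, h2,
    Module.finrank_pi] at h3
  have h4 : Module.finrank ℝ (LinearMap.ker Mᵀ.mulVecLin) = 0 := by omega
  have h5 : LinearMap.ker Mᵀ.mulVecLin = ⊥ := Submodule.finrank_eq_zero.mp h4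
  have h6 : v ∈ LinearMap.ker Mᵀ.mulVecLin := h1
  rw [h5] at h6
  exact h6

private lemma auxState {n m : ℕ} (A : Matrix (Fin n) (Fin n) ℝ) (B : Matrix (Fin n) (Fin m) ℝ)
    {N : ℕ} (x : ℕ → Fin n → ℝ) (u : ℕ → Fin m → ℝ)
    (hx : ∀ k, k < N → x (k+1) = A.mulVec (x k) + B.mulVec (u k)) :
    ∀ s j, j + s ≤ N → x (j + s) = (A ^ s).mulVec (x j) +
      ∑ r ∈ range s, (A ^ (s - 1 - r) * B).mulVec (u (j + r)) := by
  intro s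
  induction s with
  | zero => intro j h; simp
  | succ s IH =>
    intro j h
    have h1 : x (j + (s+1)) = A.mulVec (x (j+s)) + B.mulVec (u (j+s)) := hx (j+s) (by omega)
    rw [h1, IH j (by omega), Matrix.mulVec_add, Finset.sum_range_succ]
    have hA : A.mulVec ((A ^ s).mulVec (x j)) = (A ^ (s+1)).mulVec (x j) := by
      rw [Matrix.mulVec_mulVec, ← pow_succ']
    have hsum : A.mulVec (∑ r ∈ range s, (A ^ (s - 1 - r) * B).mulVec (u (j + r)))
        = ∑ r ∈ range s, (A ^ (s + 1 - 1 - r) * B).mulVec (u (j + r)) := by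
      rw [show A.mulVec = A.mulVecLin from rfl, map_sum]
      refine Finset.sum_congr rfl fun r hr => ?_
      simp only [Finset.mem_range] at hr
      rw [Matrix.mulVecLin_apply, Matrix.mulVec_mulVec,
        show s + 1 - 1 - r = (s - 1 - r) + 1 by omega, pow_succ', Matrix.mul_assoc]
    rw [hA, hsum]
    simp only [show s + 1 - 1 - s = 0 by omega, pow_zero, Matrix.one_mul, add_assoc]

private lemma keyKernel {n m T L : ℕ}
    (A : Matrix (Fin n) (Fin n) ℝ) (B : Matrix (Fin n) (Fin m) ℝ)
    (hctrb : Controllable A B)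
    (u : Fin T → Fin m → ℝ) (uu : ℕ → Fin m → ℝ) (xx : ℕ → Fin n → ℝ)
    (huuv : ∀ t (h : t < T) i, uu t i = u ⟨t, h⟩ i)
    (hxxrec : ∀ k, k < T → xx (k+1) = A.mulVec (xx k) + B.mulVec (uu k))
    (hL : L ≤ T) (hLn : L + n ≤ T)
    (hpe : PersistentlyExciting (L + n) hLn u)
    (v : (Fin L × Fin m) ⊕ (Fin n) → ℝ)
    (hv : ∀ jj : ℕ, jj ≤ T - L →
      (∑ k : Fin L, ∑ i, v (Sum.inl (k, i)) * uu ((k : ℕ) + jj) i) +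
        ∑ a, v (Sum.inr a) * xx jj a = 0) :
    v = 0 := by
  classical
  set ξ : ℕ → Fin m → ℝ := fun k i => if h : k < L then v (Sum.inl (⟨k, h⟩, i)) else 0 with hξ
  set η : Fin n → ℝ := fun a => v (Sum.inr a) with hη
  have hsf := auxState A B xx uu hxxrec
  have hker : ∀ jj : ℕ, jj ≤ T - L →
      (∑ k ∈ range L, ∑ i, ξ k i * uu (k + jj) i) = - ∑ a, η a * xx jj a := by
    intro jj hjj
    have h := hv jj hjj
    have e1 : (∑ k ∈ range L, ∑ i, ξ k i * uu (k + jj) i)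
        = ∑ k : Fin L, ∑ i, v (Sum.inl (k, i)) * uu ((k : ℕ) + jj) i := by
      rw [← Fin.sum_univ_eq_sum_range (fun k => ∑ i, ξ k i * uu (k + jj) i) L]
      refine Finset.sum_congr rfl fun k _ => Finset.sum_congr rfl fun i _ => ?_
      simp only [hξ, dif_pos k.isLt, Fin.eta]
    rw [e1]
    linarith [h]
  set c : ℕ → ℝ := fun s => A.charpoly.coeff s with hc
  have hdeg : A.charpoly.natDegree = n := by
    simpa using A.charpoly_natDegree_eq_dim
  have hcn : c n = 1 := by
    have h1 := A.charpoly_monic.coeff_natDegree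
    rw [hdeg] at h1
    exact h1
  have hCH : ∀ a b : Fin n, (∑ s ∈ range (n+1), c s * (A ^ s) a b) = 0 := by
    intro a b
    have h1 : (Polynomial.aeval A) A.charpoly = 0 := A.aeval_self_charpoly
    rw [Polynomial.aeval_eq_sum_range' (n := n+1) (by omega)] at h1
    calc ∑ s ∈ range (n+1), c s * (A ^ s) a b
        = (∑ s ∈ range (n+1), c s • A ^ s) a b := by
          rw [Matrix.sum_apply]
          exact Finset.sum_congr rfl fun s _ => rfl
      _ = 0 := by rw [h1]; rfl
  set w : ℕ → ℕ → Fin m → ℝ := fun s r i =>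
    if r < s then (Matrix.vecMul η (A ^ (s - 1 - r) * B)) i else ξ (r - s) i with hw
  set W : Fin (L+n) × Fin m → ℝ := fun ri => ∑ s ∈ range (n+1), c s * w s ri.1 ri.2 with hW
  set H := Hankel (L+n) hLn u with hH
  -- main computation: W is in the left kernel of H
  have hWker : H.vecMul W = 0 := by
    funext j
    set jj := (j : ℕ) with hjjdef
    have hjj : jj ≤ T - (L + n) := by omega
    have hHe : ∀ (r : Fin (L+n)) (i : Fin m), H (r, i) j = uu ((r : ℕ) + jj) i := by
      intro r i
      rw [hH, huuv ((r : ℕ) + jj) (by omega) i]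
      rfl
    have hS : ∀ s, s ≤ n →
        (∑ r ∈ range (L+n), ∑ i, w s r i * uu (r + jj) i)
          = - ∑ a, (Matrix.vecMul η (A ^ s)) a * xx jj a := by
      intro s hs
      rw [show L + n = s + (L + (n - s)) by omega, Finset.sum_range_add]
      have e3 : (∑ t ∈ range (L + (n - s)), ∑ i, w s (s + t) i * uu (s + t + jj) i)
          = ∑ t ∈ range L, ∑ i, ξ t i * uu (t + (s + jj)) i := by
        rw [Finset.sum_range_add]
        have ez : (∑ t ∈ range (n - s), ∑ i, w s (s + (L + t)) i * uu (s + (L + t) + jj) i)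
            = 0 := by
          refine Finset.sum_eq_zero fun t _ => Finset.sum_eq_zero fun i _ => ?_
          have hzz : w s (s + (L + t)) i = 0 := by
            rw [hw]
            simp only [if_neg (show ¬ s + (L + t) < s by omega)]
            rw [hξ]
            simp only [show s + (L + t) - s = L + t by omega,
              dif_neg (show ¬ L + t < L by omega)]
          rw [hzz, zero_mul]
        rw [ez, add_zero]
        refine Finset.sum_congr rfl fun t ht => Finset.sum_congr rfl fun i _ => ?_
        have hwt : w s (s + t) i = ξ t i := by
          rw [hw]
          simp only [if_neg (show ¬ s + t < s by omega), show s + t - s = t by omega]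
        rw [hwt, show s + t + jj = t + (s + jj) by omega]
      have e2 : (∑ t ∈ range L, ∑ i, ξ t i * uu (t + (s + jj)) i)
          = - ∑ a, η a * xx (s + jj) a := hker (s + jj) (by omega)
      have e1 : (∑ r ∈ range s, ∑ i, w s r i * uu (r + jj) i)
          = ∑ a, η a * xx (jj + s) a - ∑ a, η a * ((A ^ s).mulVec (xx jj)) a := by
        have hx1 : xx (jj + s) = (A ^ s).mulVec (xx jj) +
            ∑ r ∈ range s, (A ^ (s - 1 - r) * B).mulVec (uu (jj + r)) :=
          hsf s jj (by omega)
        have e1a : (∑ r ∈ range s, ∑ i, w s r i * uu (r + jj) i)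
            = ∑ r ∈ range s, ∑ a, η a * ((A ^ (s - 1 - r) * B).mulVec (uu (jj + r))) a := by
          refine Finset.sum_congr rfl fun r hr => ?_
          rw [Finset.mem_range] at hr
          have hwr : ∀ i, w s r i = (Matrix.vecMul η (A ^ (s - 1 - r) * B)) i := by
            intro i; rw [hw]; simp only [if_pos hr]
          calc (∑ i, w s r i * uu (r + jj) i)
              = dotProduct (Matrix.vecMul η (A ^ (s - 1 - r) * B)) (uu (jj + r)) := by
                refine Finset.sum_congr rfl fun i _ => ?_
                rw [hwr i, show r + jj = jj + r by omega]
            _ = dotProduct η ((A ^ (s - 1 - r) * B).mulVec (uu (jj + r))) :=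
                (dotProduct_mulVec η (A ^ (s - 1 - r) * B) (uu (jj + r))).symm
            _ = ∑ a, η a * ((A ^ (s - 1 - r) * B).mulVec (uu (jj + r))) a := rfl
        rw [e1a, Finset.sum_comm]
        have hper : ∀ a : Fin n,
            (∑ r ∈ range s, η a * ((A ^ (s - 1 - r) * B).mulVec (uu (jj + r))) a)
            = η a * (xx (jj + s) a - ((A ^ s).mulVec (xx jj)) a) := by
          intro a
          rw [← Finset.mul_sum]
          congr 1
          have h2 := congrFun hx1 a
          rw [Pi.add_apply, Finset.sum_apply] at h2
          linarith [h2]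
        rw [Finset.sum_congr rfl fun a _ => hper a]
        simp only [mul_sub, Finset.sum_sub_distrib]
      rw [e3, e2, e1, show jj + s = s + jj by omega]
      have e4 : (∑ a, η a * ((A ^ s).mulVec (xx jj)) a)
          = ∑ b, (Matrix.vecMul η (A ^ s)) b * xx jj b :=
        dotProduct_mulVec η (A ^ s) (xx jj)
      linarith [e4]
    show (∑ ri : Fin (L+n) × Fin m, W ri * H ri j) = 0
    have key : ∀ s ∈ range (n+1),
        (∑ ri : Fin (L+n) × Fin m, c s * (w s ri.1 ri.2 * uu (ri.1 + jj) ri.2))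
          = c s * (- ∑ a, (Matrix.vecMul η (A ^ s)) a * xx jj a) := by
      intro s hs
      rw [Finset.mem_range] at hs
      rw [← Finset.mul_sum]
      congr 1
      rw [Fintype.sum_prod_type,
        Fin.sum_univ_eq_sum_range (fun r => ∑ i, w s r i * uu (r + jj) i) (L+n)]
      exact hS s (by omega)
    calc (∑ ri : Fin (L+n) × Fin m, W ri * H ri j)
        = ∑ ri : Fin (L+n) × Fin m, ∑ s ∈ range (n+1),
            c s * (w s ri.1 ri.2 * uu (ri.1 + jj) ri.2) := by
          refine Finset.sum_congr rfl fun ri _ => ?_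
          rw [show H ri j = uu (ri.1 + jj) ri.2 from hHe ri.1 ri.2]
          rw [hW, Finset.sum_mul]
          exact Finset.sum_congr rfl fun s _ => by ring
      _ = ∑ s ∈ range (n+1), ∑ ri : Fin (L+n) × Fin m,
            c s * (w s ri.1 ri.2 * uu (ri.1 + jj) ri.2) := Finset.sum_comm
      _ = ∑ s ∈ range (n+1), c s * (- ∑ a, (Matrix.vecMul η (A ^ s)) a * xx jj a) :=
          Finset.sum_congr rfl key
      _ = - ∑ a, (∑ s ∈ range (n+1), c s * (Matrix.vecMul η (A ^ s)) a) * xx jj a := by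
          simp only [mul_neg, Finset.mul_sum]
          rw [Finset.sum_neg_distrib]
          congr 1
          rw [Finset.sum_comm]
          refine Finset.sum_congr rfl fun a _ => ?_
          rw [Finset.sum_mul]
          exact Finset.sum_congr rfl fun s _ => by ring
      _ = 0 := by
          have hz : ∀ a : Fin n,
              (∑ s ∈ range (n+1), c s * (Matrix.vecMul η (A ^ s)) a) = 0 := by
            intro a
            have e : ∀ s : ℕ, (Matrix.vecMul η (A ^ s)) a = ∑ b, η b * (A ^ s) b a :=
              fun s => rfl
            calc ∑ s ∈ range (n+1), c s * (Matrix.vecMul η (A ^ s)) a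
                = ∑ s ∈ range (n+1), ∑ b, η b * (c s * (A ^ s) b a) := by
                  refine Finset.sum_congr rfl fun s _ => ?_
                  rw [e s, Finset.mul_sum]
                  exact Finset.sum_congr rfl fun b _ => by ring
              _ = ∑ b, η b * ∑ s ∈ range (n+1), c s * (A ^ s) b a := by
                  rw [Finset.sum_comm]
                  exact Finset.sum_congr rfl fun b _ => (Finset.mul_sum _ _ _).symm
              _ = 0 := Finset.sum_eq_zero fun b _ => by rw [hCH b a, mul_zero]
          rw [neg_eq_zero]
          exact Finset.sum_eq_zero fun a _ => by rw [hz a, zero_mul]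
  have hWzero : W = 0 := vecMulZero H (by rw [Fintype.card_prod, Fintype.card_fin, Fintype.card_fin]; exact hpe) hWker
  have hWe : ∀ (r : ℕ) (hr : r < L + n) (i : Fin m),
      (∑ s ∈ range (n+1), c s * w s r i) = 0 := by
    intro r hr i
    exact congrFun hWzero (⟨r, hr⟩, i)
  -- ξ = 0
  have hxi : ∀ k i, ξ k i = 0 := by
    have hxiL : ∀ d k, k < L → L - 1 - k = d → ∀ i, ξ k i = 0 := by
      intro d
      induction d using Nat.strong_induction_on with
      | _ d IH =>
        intro k hk hd i
        have h0 : (∑ s ∈ range (n+1), c s * w s (k+n) i) = 0 := hWe (k+n) (by omega) i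
        rw [Finset.sum_range_succ] at h0
        have hz : ∀ s ∈ range n, c s * w s (k+n) i = 0 := by
          intro s hs
          rw [Finset.mem_range] at hs
          have hws : w s (k+n) i = ξ (k+n-s) i := by
            rw [hw]; simp only [if_neg (show ¬ k+n < s by omega)]
          rw [hws]
          by_cases hcase : k + n - s < L
          · rw [IH (L-1-(k+n-s)) (by omega) (k+n-s) hcase rfl i, mul_zero]
          · rw [hξ]; simp only [dif_neg hcase, mul_zero]
        rw [Finset.sum_eq_zero hz, zero_add] at h0
        have hwn : w n (k+n) i = ξ k i := by
          rw [hw]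
          simp only [if_neg (show ¬ k+n < n by omega), show k+n-n = k by omega]
        rw [hwn, hcn, one_mul] at h0
        exact h0
    intro k i
    by_cases hk : k < L
    · exact hxiL (L-1-k) k hk rfl i
    · rw [hξ]; simp only [dif_neg hk]
  -- Markov parameters vanish
  have hmk : ∀ k, k < n → ∀ i, (Matrix.vecMul η (A ^ k * B)) i = 0 := by
    intro k
    induction k using Nat.strong_induction_on with
    | _ k IH =>
      intro hk i
      have h0 : (∑ s ∈ range (n+1), c s * w s (n-1-k) i) = 0 := hWe (n-1-k) (by omega) i
      rw [Finset.sum_range_succ] at h0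
      have hz : ∀ s ∈ range n, c s * w s (n-1-k) i = 0 := by
        intro s hs
        rw [Finset.mem_range] at hs
        by_cases hcs : n-1-k < s
        · have hws : w s (n-1-k) i = Matrix.vecMul η (A ^ (s-1-(n-1-k)) * B) i := by
            rw [hw]; simp only [if_pos hcs]
          rw [hws, IH (s-1-(n-1-k)) (by omega) (by omega) i, mul_zero]
        · have hws : w s (n-1-k) i = ξ (n-1-k-s) i := by
            rw [hw]; simp only [if_neg hcs]
          rw [hws, hxi, mul_zero]
      rw [Finset.sum_eq_zero hz, zero_add] at h0
      have hwn : w n (n-1-k) i = Matrix.vecMul η (A ^ k * B) i := by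
        rw [hw]
        simp only [if_pos (show n-1-k < n by omega), show n-1-(n-1-k) = k by omega]
      rw [hwn, hcn, one_mul] at h0
      exact h0
  have heta : η = 0 := by
    apply vecMulZero
      (Matrix.of (fun (i : Fin n) (kj : Fin n × Fin m) => (A ^ (kj.1 : ℕ) * B) i kj.2))
      (by rw [Fintype.card_fin]; exact hctrb)
    funext kj
    exact hmk kj.1 kj.1.isLt kj.2
  funext r
  rcases r with ik | a
  · have h1 := hxi ik.1 ik.2
    rw [hξ] at h1
    simp only [dif_pos ik.1.isLt, Fin.eta] at h1
    exact h1
  · exact congrFun heta a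

/-- Willems' Fundamental Lemma (image-inclusion direction): if `(u,y)` is a trajectory
of a controllable LTI system and `u` is persistently exciting of order `L + n`, then
every length-`L` trajectory `(ū, ȳ)` lies in the column span of the stacked Hankel
matrices of the data. -/
theorem stmt3 {n m p T L : ℕ}
    (A : Matrix (Fin n) (Fin n) ℝ) (B : Matrix (Fin n) (Fin m) ℝ)
    (C : Matrix (Fin p) (Fin n) ℝ) (D : Matrix (Fin p) (Fin m) ℝ)
    (hctrb : Controllable A B)
    (u : Fin T → Fin m → ℝ) (y : Fin T → Fin p → ℝ)
    (htraj : IsTraj A B C D u y)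
    (hL : L ≤ T) (hLn : L + n ≤ T)
    (hpe : PersistentlyExciting (L + n) hLn u)
    (ubar : Fin L → Fin m → ℝ) (ybar : Fin L → Fin p → ℝ)
    (hbar : IsTraj A B C D ubar ybar) :
    ∃ g : Fin (T - L + 1) → ℝ,
      (Hankel L hL u).mulVec g = (fun ik => ubar ik.1 ik.2) ∧
      (Hankel L hL y).mulVec g = (fun ik => ybar ik.1 ik.2) := by
  classical
  obtain ⟨x0, hx0, hy0⟩ := htraj
  obtain ⟨xb0, hxb0, hyb0⟩ := hbar
  set uu : ℕ → Fin m → ℝ := fun t i => if h : t < T then u ⟨t, h⟩ i else 0 with huu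
  set yy : ℕ → Fin p → ℝ := fun t i => if h : t < T then y ⟨t, h⟩ i else 0 with hyy
  set xx : ℕ → Fin n → ℝ := fun t a => if h : t < T + 1 then x0 ⟨t, h⟩ a else 0 with hxx
  set ub : ℕ → Fin m → ℝ := fun t i => if h : t < L then ubar ⟨t, h⟩ i else 0 with hub
  set xbb : ℕ → Fin n → ℝ := fun t a => if h : t < L + 1 then xb0 ⟨t, h⟩ a else 0 with hxbb
  have huuf : ∀ t (h : t < T), uu t = u ⟨t, h⟩ := by
    intro t h; funext i; rw [huu]; simp only [dif_pos h]
  have huuv : ∀ t (h : t < T) i, uu t i = u ⟨t, h⟩ i := fun t h i => by rw [huuf t h]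
  have hyyf : ∀ t (h : t < T), yy t = y ⟨t, h⟩ := by
    intro t h; funext i; rw [hyy]; simp only [dif_pos h]
  have hxxf : ∀ t (h : t < T + 1), xx t = x0 ⟨t, h⟩ := by
    intro t h; funext a; rw [hxx]; simp only [dif_pos h]
  have hubf : ∀ t (h : t < L), ub t = ubar ⟨t, h⟩ := by
    intro t h; funext i; rw [hub]; simp only [dif_pos h]
  have hxbbf : ∀ t (h : t < L + 1), xbb t = xb0 ⟨t, h⟩ := by
    intro t h; funext a; rw [hxbb]; simp only [dif_pos h]
  have hxxrec : ∀ k, k < T → xx (k+1) = A.mulVec (xx k) + B.mulVec (uu k) := by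
    intro k hk
    rw [hxxf (k+1) (by omega), hxxf k (by omega), huuf k hk]
    exact hx0 ⟨k, hk⟩
  have hxbrec : ∀ k, k < L → xbb (k+1) = A.mulVec (xbb k) + B.mulVec (ub k) := by
    intro k hk
    rw [hxbbf (k+1) (by omega), hxbbf k (by omega), hubf k hk]
    exact hxb0 ⟨k, hk⟩
  have hyyrec : ∀ t (h : t < T),
      yy t = fun i' => (C.mulVec (xx t)) i' + (D.mulVec (uu t)) i' := by
    intro t ht
    rw [hyyf t ht, hy0 ⟨t, ht⟩, hxxf t (by omega), huuf t ht]
    rfl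
  have hybv : ∀ k : Fin L,
      ybar k = fun i' => (C.mulVec (xbb (k : ℕ))) i' + (D.mulVec (ub (k : ℕ))) i' := by
    intro k
    rw [hyb0 k, hxbbf (k : ℕ) (by omega), hubf (k : ℕ) k.isLt]
    rfl
  have hsf := auxState A B xx uu hxxrec
  have hsfb := auxState A B xbb ub hxbrec
  set M : Matrix ((Fin L × Fin m) ⊕ (Fin n)) (Fin (T - L + 1)) ℝ :=
    Matrix.of (fun r j => Sum.elim
      (fun ik : Fin L × Fin m => uu ((ik.1 : ℕ) + (j : ℕ)) ik.2)
      (fun a : Fin n => xx (j : ℕ) a) r) with hM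
  have hMsurj : Function.Surjective M.mulVec := by
    apply surjMulVec
    intro v hv
    apply keyKernel A B hctrb u uu xx huuv hxxrec hL hLn hpe v
    intro jj hjj
    have h := congrFun hv (⟨jj, by omega⟩ : Fin (T - L + 1))
    have e : (∑ k : Fin L, ∑ i, v (Sum.inl (k, i)) * uu ((k : ℕ) + jj) i) +
        ∑ a, v (Sum.inr a) * xx jj a
        = Matrix.vecMul v M (⟨jj, by omega⟩ : Fin (T - L + 1)) := by
      show _ = ∑ r, v r * M r (⟨jj, by omega⟩ : Fin (T - L + 1))
      rw [Fintype.sum_sum_type]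
      congr 1
      · rw [Fintype.sum_prod_type]
        rfl
    exact e.trans h
  obtain ⟨g, hg⟩ := hMsurj (Sum.elim (fun ik : Fin L × Fin m => ubar ik.1 ik.2)
    (fun a : Fin n => xbb 0 a))
  have hgU : ∀ (r : ℕ) (hr : r < L) (i' : Fin m),
      (∑ j : Fin (T - L + 1), uu (r + (j : ℕ)) i' * g j) = ubar ⟨r, hr⟩ i' :=
    fun r hr i' => congrFun hg (Sum.inl (⟨r, hr⟩, i'))
  have hgX : ∀ a : Fin n, (∑ j : Fin (T - L + 1), xx (j : ℕ) a * g j) = xbb 0 a :=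
    fun a => congrFun hg (Sum.inr a)
  have hxg : (fun a => ∑ j : Fin (T - L + 1), g j * xx (j : ℕ) a) = xbb 0 := by
    funext a; rw [← hgX a]; exact Finset.sum_congr rfl fun j _ => by ring
  have hug : ∀ (r : ℕ) (hr : r < L),
      (fun i' => ∑ j : Fin (T - L + 1), g j * uu ((j : ℕ) + r) i') = ub r := by
    intro r hr
    funext i'
    rw [hubf r hr, ← hgU r hr i']
    refine Finset.sum_congr rfl fun j _ => ?_
    rw [show (j : ℕ) + r = r + (j : ℕ) by omega]
    ring
  refine ⟨g, ?_, ?_⟩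
  · funext ik
    show (∑ j, Hankel L hL u ik j * g j) = ubar ik.1 ik.2
    have h1 : (ik.1 : ℕ) < L := ik.1.isLt
    rw [show ubar ik.1 ik.2 = ubar ⟨(ik.1 : ℕ), h1⟩ ik.2 by rw [Fin.eta]]
    rw [← hgU (ik.1 : ℕ) h1 ik.2]
    refine Finset.sum_congr rfl fun j _ => ?_
    congr 1
    have h2 : (ik.1 : ℕ) + (j : ℕ) < T := by have := j.isLt; omega
    rw [huuv ((ik.1 : ℕ) + (j : ℕ)) h2 ik.2]
    rfl
  · funext ik
    obtain ⟨k, i⟩ := ik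
    have hkL : (k : ℕ) < L := k.isLt
    show (∑ j, Hankel L hL y (k, i) j * g j) = ybar k i
    have hyH : ∀ j : Fin (T - L + 1), Hankel L hL y (k, i) j = yy ((k : ℕ) + (j : ℕ)) i := by
      intro j
      have h2 : (k : ℕ) + (j : ℕ) < T := by have := j.isLt; omega
      rw [hyyf ((k : ℕ) + (j : ℕ)) h2]
      rfl
    have hyyA : ∀ j : Fin (T - L + 1), yy ((k : ℕ) + (j : ℕ)) i
        = (C.mulVec (xx ((k : ℕ) + (j : ℕ)))) i + (D.mulVec (uu ((k : ℕ) + (j : ℕ)))) i := by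
      intro j
      have h2 : (k : ℕ) + (j : ℕ) < T := by have := j.isLt; omega
      exact congrFun (hyyrec ((k : ℕ) + (j : ℕ)) h2) i
    have hX : ∀ j : Fin (T - L + 1), xx ((k : ℕ) + (j : ℕ))
        = (A ^ (k : ℕ)).mulVec (xx (j : ℕ)) +
          ∑ r ∈ range (k : ℕ), (A ^ ((k : ℕ) - 1 - r) * B).mulVec (uu ((j : ℕ) + r)) := by
      intro j
      have h := hsf (k : ℕ) (j : ℕ) (by have := j.isLt; omega)
      rw [show (j : ℕ) + (k : ℕ) = (k : ℕ) + (j : ℕ) by omega] at h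
      exact h
    have split : ∀ j : Fin (T - L + 1), yy ((k : ℕ) + (j : ℕ)) i * g j
        = g j * ((C * A ^ (k : ℕ)).mulVec (xx (j : ℕ))) i
          + (∑ r ∈ range (k : ℕ),
              g j * ((C * (A ^ ((k : ℕ) - 1 - r) * B)).mulVec (uu ((j : ℕ) + r))) i)
          + g j * (D.mulVec (uu ((k : ℕ) + (j : ℕ)))) i := by
      intro j
      rw [hyyA j, hX j, Matrix.mulVec_add, Pi.add_apply]
      have hCs : (C.mulVec (∑ r ∈ range (k : ℕ),
            (A ^ ((k : ℕ) - 1 - r) * B).mulVec (uu ((j : ℕ) + r)))) i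
          = ∑ r ∈ range (k : ℕ),
            (C.mulVec ((A ^ ((k : ℕ) - 1 - r) * B).mulVec (uu ((j : ℕ) + r)))) i := by
        rw [show C.mulVec = C.mulVecLin from rfl, map_sum, Finset.sum_apply]
      rw [hCs]
      rw [Matrix.mulVec_mulVec]
      have hmid : ∀ r ∈ range (k : ℕ),
          (C.mulVec ((A ^ ((k : ℕ) - 1 - r) * B).mulVec (uu ((j : ℕ) + r)))) i
          = ((C * (A ^ ((k : ℕ) - 1 - r) * B)).mulVec (uu ((j : ℕ) + r))) i := by
        intro r _; rw [Matrix.mulVec_mulVec]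
      rw [Finset.sum_congr rfl hmid]
      rw [add_mul, add_mul, Finset.sum_mul]
      have : ∀ r ∈ range (k : ℕ),
          ((C * (A ^ ((k : ℕ) - 1 - r) * B)).mulVec (uu ((j : ℕ) + r))) i * g j
          = g j * ((C * (A ^ ((k : ℕ) - 1 - r) * B)).mulVec (uu ((j : ℕ) + r))) i := by
        intro r _; ring
      rw [Finset.sum_congr rfl this]
      ring
    calc (∑ j, Hankel L hL y (k, i) j * g j)
        = ∑ j : Fin (T - L + 1), yy ((k : ℕ) + (j : ℕ)) i * g j :=
          Finset.sum_congr rfl fun j _ => by rw [hyH j]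
      _ = (∑ j : Fin (T - L + 1), g j * ((C * A ^ (k : ℕ)).mulVec (xx (j : ℕ))) i)
          + (∑ j : Fin (T - L + 1), ∑ r ∈ range (k : ℕ),
              g j * ((C * (A ^ ((k : ℕ) - 1 - r) * B)).mulVec (uu ((j : ℕ) + r))) i)
          + ∑ j : Fin (T - L + 1), g j * (D.mulVec (uu ((k : ℕ) + (j : ℕ)))) i := by
          rw [Finset.sum_congr rfl fun j _ => split j]
          simp only [Finset.sum_add_distrib]
      _ = ((C * A ^ (k : ℕ)).mulVec (xbb 0)) i
          + (∑ r ∈ range (k : ℕ), ((C * (A ^ ((k : ℕ) - 1 - r) * B)).mulVec (ub r)) i)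
          + (D.mulVec (ub (k : ℕ))) i := by
          congr 1
          · congr 1
            · rw [swapLin, hxg]
            · rw [Finset.sum_comm]
              refine Finset.sum_congr rfl fun r hr => ?_
              rw [Finset.mem_range] at hr
              rw [swapLin (C * (A ^ ((k : ℕ) - 1 - r) * B)) g (fun j : Fin (T - L + 1) => uu ((j : ℕ) + r)),
                hug r (by omega)]
          · rw [swapLin D g (fun j : Fin (T - L + 1) => uu ((k : ℕ) + (j : ℕ)))]
            congr 1
            funext i'
            have h := congrFun (hug (k : ℕ) hkL) i'
            rw [← h]
            exact Finset.sum_congr rfl fun j _ => by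
              rw [show (k : ℕ) + (j : ℕ) = (j : ℕ) + (k : ℕ) by omega]
      _ = ybar k i := by
          have h1 := congrFun (hybv k) i
          have h2 := hsfb (k : ℕ) 0 (by omega)
          simp only [Nat.zero_add] at h2
          rw [h1, h2, Matrix.mulVec_add, Pi.add_apply]
          have hCs2 : (C.mulVec (∑ r ∈ range (k : ℕ),
                (A ^ ((k : ℕ) - 1 - r) * B).mulVec (ub r))) i
              = ∑ r ∈ range (k : ℕ),
                ((C * (A ^ ((k : ℕ) - 1 - r) * B)).mulVec (ub r)) i := by
            rw [show C.mulVec = C.mulVecLin from rfl, map_sum, Finset.sum_apply]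
            exact Finset.sum_congr rfl fun r _ => by
              rw [Matrix.mulVecLin_apply, Matrix.mulVec_mulVec]
          rw [hCs2, Matrix.mulVec_mulVec]
end

section
/- Persistent excitation of order L + n for data from a controllable LTI system implies the stacked Hankel matrix [H_L(u); H_L(y)] has rank exactly L·m + n. -/
open Matrix

def ObsMat {n p : ℕ} (A : Matrix (Fin n) (Fin n) ℝ) (C : Matrix (Fin p) (Fin n) ℝ)
    (L : ℕ) : Matrix (Fin L × Fin p) (Fin n) ℝ :=
  fun iq j => (C * A ^ (iq.1 : ℕ)) iq.2 j

section AuxRank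
set_option linter.unusedSectionVars false
variable {α β γ : Type*} [Fintype α] [Fintype β] [Fintype γ]

lemma rank_eq_finrank (M : Matrix α β ℝ) :
    M.rank = Module.finrank ℝ (LinearMap.range M.mulVecLin) := rfl

lemma inj_of_rank_eq_card (M : Matrix α β ℝ) (h : M.rank = Fintype.card β) :
    Function.Injective M.mulVecLin := by
  rw [← LinearMap.ker_eq_bot, ← Submodule.finrank_eq_zero (R := ℝ)]
  have h1 := LinearMap.finrank_range_add_finrank_ker M.mulVecLin
  have h2 : Module.finrank ℝ (β → ℝ) = Fintype.card β := Module.finrank_pi ℝ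
  rw [rank_eq_finrank] at h
  omega

lemma rank_eq_card_of_inj (M : Matrix α β ℝ) (h : Function.Injective M.mulVecLin) :
    M.rank = Fintype.card β := by
  have h1 := LinearMap.finrank_range_add_finrank_ker M.mulVecLin
  have h2 : Module.finrank ℝ (β → ℝ) = Fintype.card β := Module.finrank_pi ℝ
  rw [LinearMap.ker_eq_bot.mpr h, finrank_bot] at h1
  rw [rank_eq_finrank]
  omega

lemma inj_iff_zero (M : Matrix α β ℝ) :
    Function.Injective M.mulVecLin ↔ ∀ v, M *ᵥ v = 0 → v = 0 := by
  rw [← LinearMap.ker_eq_bot, LinearMap.ker_eq_bot']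
  simp only [Matrix.mulVecLin_apply]

lemma rank_mul_of_inj (M : Matrix α β ℝ) (N : Matrix β γ ℝ)
    (h : Function.Injective M.mulVecLin) : (M * N).rank = N.rank := by
  rw [rank_eq_finrank, Matrix.mulVecLin_mul, LinearMap.range_comp, rank_eq_finrank]
  exact ((Submodule.equivMapOfInjective _ h _).finrank_eq).symm

lemma sum_dot (s : Finset ℕ) (f : ℕ → β → ℝ) (v : β → ℝ) :
    (∑ i ∈ s, f i) ⬝ᵥ v = ∑ i ∈ s, f i ⬝ᵥ v := by
  simp only [dotProduct, Finset.sum_apply, Finset.sum_mul]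
  exact Finset.sum_comm

lemma dot_sum (s : Finset ℕ) (v : β → ℝ) (f : ℕ → β → ℝ) :
    v ⬝ᵥ (∑ i ∈ s, f i) = ∑ i ∈ s, v ⬝ᵥ f i := by
  simp only [dotProduct, Finset.sum_apply, Finset.mul_sum]
  exact Finset.sum_comm

lemma mulVec_sum' (M : Matrix α β ℝ) (s : Finset ℕ) (f : ℕ → β → ℝ) :
    M *ᵥ (∑ i ∈ s, f i) = ∑ i ∈ s, M *ᵥ f i := by
  funext a
  simp only [Matrix.mulVec, dotProduct, Finset.sum_apply, Finset.mul_sum]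
  exact Finset.sum_comm

lemma sum_mulVec' (s : Finset ℕ) (f : ℕ → Matrix α β ℝ) (v : β → ℝ) :
    (∑ i ∈ s, f i) *ᵥ v = ∑ i ∈ s, f i *ᵥ v := by
  classical
  induction s using Finset.induction_on with
  | empty => simp
  | insert _ _ h ih => rw [Finset.sum_insert h, Finset.sum_insert h, Matrix.add_mulVec, ih]

lemma shift_sum {M : Type*} [AddCommMonoid M] (N k L : ℕ) (h : k + L ≤ N) (f : ℕ → M) :
    (∑ s ∈ Finset.range N, if k ≤ s ∧ s - k < L then f (s - k) else 0)
      = ∑ i ∈ Finset.range L, f i := by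
  classical
  rw [← Finset.sum_filter]
  have he : (Finset.range N).filter (fun s => k ≤ s ∧ s - k < L)
      = (Finset.range L).image (fun i => k + i) := by
    ext s; simp only [Finset.mem_filter, Finset.mem_range, Finset.mem_image]
    constructor
    · rintro ⟨h1, h2, h3⟩; exact ⟨s - k, h3, by omega⟩
    · rintro ⟨i, hi, rfl⟩; omega
  rw [he, Finset.sum_image (by intro a _ b _ hab; simp only at hab; omega)]
  exact Finset.sum_congr rfl (fun i _ => by congr 1; omega)

lemma lt_sum {M : Type*} [AddCommMonoid M] (N k : ℕ) (h : k ≤ N) (f : ℕ → M) :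
    (∑ s ∈ Finset.range N, if s < k then f s else 0) = ∑ r ∈ Finset.range k, f r := by
  classical
  rw [← Finset.sum_filter]
  congr 1
  ext s; simp only [Finset.mem_filter, Finset.mem_range]; omega

lemma ite_chain_sum {M : Type*} [AddCommMonoid M] (L i : ℕ) (hi : i < L) (f : ℕ → M) (g : M) :
    (∑ s ∈ Finset.range L, if s < i then f s else if s = i then g else 0)
      = (∑ s ∈ Finset.range i, f s) + g := by
  classical
  have h0 : ∀ s ∈ Finset.range L,
      (if s < i then f s else if s = i then g else 0)
        = (if s < i then f s else 0) + (if s = i then g else 0) := by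
    intro s _; split_ifs with h1 h2 <;> simp_all
  rw [Finset.sum_congr rfl h0, Finset.sum_add_distrib, lt_sum L i (le_of_lt hi) f,
    Finset.sum_ite_eq' (Finset.range L) i (fun _ => g), if_pos (Finset.mem_range.2 hi)]

end AuxRank

section Key
variable {n m T L : ℕ}

lemma state_formula (A : Matrix (Fin n) (Fin n) ℝ) (B : Matrix (Fin n) (Fin m) ℝ)
    (U : ℕ → Fin m → ℝ) (X : ℕ → Fin n → ℝ)
    (hdyn : ∀ t, t < T → X (t + 1) = A *ᵥ X t + B *ᵥ U t) :
    ∀ i t, t + i ≤ T → X (t + i) = (A ^ i) *ᵥ X t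
      + ∑ r ∈ Finset.range i, ((A ^ (i - 1 - r)) * B) *ᵥ U (t + r) := by
  intro i
  induction i with
  | zero => intro t _; simp
  | succ i ih =>
    intro t ht
    have h1 : t + i < T := by omega
    have h2 : t + (i + 1) = (t + i) + 1 := by ring
    rw [h2, hdyn _ h1, ih t (by omega), Matrix.mulVec_add, mulVec_sum',
      Matrix.mulVec_mulVec, ← pow_succ', Finset.sum_range_succ,
      show i + 1 - 1 - i = 0 from by omega, pow_zero, Matrix.one_mul, add_assoc]
    congr 1
    congr 1
    refine Finset.sum_congr rfl fun r hr => ?_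
    have hr' : r < i := Finset.mem_range.mp hr
    rw [Matrix.mulVec_mulVec, ← Matrix.mul_assoc, ← pow_succ',
      show i + 1 - 1 - r = i - 1 - r + 1 from by omega]

lemma willems_key (A : Matrix (Fin n) (Fin n) ℝ) (B : Matrix (Fin n) (Fin m) ℝ)
    (hctrb : Controllable A B)
    (U : ℕ → Fin m → ℝ) (X : ℕ → Fin n → ℝ)
    (hdyn : ∀ t, t < T → X (t + 1) = A *ᵥ X t + B *ᵥ U t)
    (hLT : L + n ≤ T)
    (hPE : ∀ wv : ℕ → Fin m → ℝ,
      (∀ j, j + (L + n) ≤ T → ∑ s ∈ Finset.range (L + n), wv s ⬝ᵥ U (j + s) = 0) →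
      ∀ s, s < L + n → wv s = 0)
    (ξ : ℕ → Fin m → ℝ) (η : Fin n → ℝ)
    (hsupp : ∀ i, L ≤ i → ξ i = 0)
    (hker : ∀ j, j + L ≤ T →
      (∑ i ∈ Finset.range L, ξ i ⬝ᵥ U (j + i)) + η ⬝ᵥ X j = 0) :
    (∀ i, ξ i = 0) ∧ η = 0 := by
  classical
  have hCH : ∑ k ∈ Finset.range (n + 1), (A.charpoly.coeff k) • A ^ k = 0 := by
    have h0 := Matrix.aeval_self_charpoly A
    rw [Polynomial.aeval_eq_sum_range, Matrix.charpoly_natDegree_eq_dim A,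
      Fintype.card_fin] at h0
    exact h0
  have hcn : A.charpoly.coeff n = 1 := by
    have h1 := (Matrix.charpoly_monic A).coeff_natDegree
    rwa [Matrix.charpoly_natDegree_eq_dim A, Fintype.card_fin] at h1
  have hRk : ∀ k, k ≤ n → ∀ j, j + k + L ≤ T →
      η ⬝ᵥ ((A ^ k) *ᵥ X j)
        = -(∑ i ∈ Finset.range L, ξ i ⬝ᵥ U (j + k + i))
          - ∑ r ∈ Finset.range k, (η ᵥ* (A ^ (k - 1 - r) * B)) ⬝ᵥ U (j + r) := by
    intro k hk j hj
    have h1 := state_formula A B U X hdyn k j (by omega)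
    have h2 := hker (j + k) (by omega)
    have h3 : η ⬝ᵥ X (j + k)
        = η ⬝ᵥ ((A ^ k) *ᵥ X j)
          + ∑ r ∈ Finset.range k, (η ᵥ* (A ^ (k - 1 - r) * B)) ⬝ᵥ U (j + r) := by
      rw [h1, dotProduct_add, dot_sum]
      congr 1
      exact Finset.sum_congr rfl fun r _ => dotProduct_mulVec η _ _
    linarith [h2, h3]
  set w : ℕ → Fin m → ℝ := fun s =>
    (∑ k ∈ Finset.range (n + 1),
        if k ≤ s ∧ s - k < L then (A.charpoly.coeff k) • ξ (s - k) else 0)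
      + ∑ k ∈ Finset.range (n + 1),
        if s < k then (A.charpoly.coeff k) • (η ᵥ* (A ^ (k - 1 - s) * B)) else 0
    with hwdef
  have hwH : ∀ j, j + (L + n) ≤ T →
      ∑ s ∈ Finset.range (L + n), w s ⬝ᵥ U (j + s) = 0 := by
    intro j hj
    have step1 : ∀ s, w s ⬝ᵥ U (j + s)
        = (∑ k ∈ Finset.range (n + 1),
            if k ≤ s ∧ s - k < L then (A.charpoly.coeff k) * (ξ (s - k) ⬝ᵥ U (j + s)) else 0)
          + ∑ k ∈ Finset.range (n + 1),
            if s < k then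
              (A.charpoly.coeff k) * ((η ᵥ* (A ^ (k - 1 - s) * B)) ⬝ᵥ U (j + s)) else 0 := by
      intro s
      simp only [hwdef]
      rw [add_dotProduct, sum_dot, sum_dot]
      congr 1
      · refine Finset.sum_congr rfl fun k _ => ?_
        split_ifs
        · rw [smul_dotProduct, smul_eq_mul]
        · rw [zero_dotProduct]
      · refine Finset.sum_congr rfl fun k _ => ?_
        split_ifs
        · rw [smul_dotProduct, smul_eq_mul]
        · rw [zero_dotProduct]
    calc ∑ s ∈ Finset.range (L + n), w s ⬝ᵥ U (j + s)
        = ∑ s ∈ Finset.range (L + n),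
            ((∑ k ∈ Finset.range (n + 1),
              if k ≤ s ∧ s - k < L then (A.charpoly.coeff k) * (ξ (s - k) ⬝ᵥ U (j + s)) else 0)
            + ∑ k ∈ Finset.range (n + 1),
              if s < k then
                (A.charpoly.coeff k) * ((η ᵥ* (A ^ (k - 1 - s) * B)) ⬝ᵥ U (j + s)) else 0) :=
          Finset.sum_congr rfl fun s _ => step1 s
      _ = (∑ s ∈ Finset.range (L + n), ∑ k ∈ Finset.range (n + 1),
            if k ≤ s ∧ s - k < L then (A.charpoly.coeff k) * (ξ (s - k) ⬝ᵥ U (j + s)) else 0)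
          + ∑ s ∈ Finset.range (L + n), ∑ k ∈ Finset.range (n + 1),
            if s < k then
              (A.charpoly.coeff k) * ((η ᵥ* (A ^ (k - 1 - s) * B)) ⬝ᵥ U (j + s)) else 0 :=
          Finset.sum_add_distrib
      _ = (∑ k ∈ Finset.range (n + 1), ∑ s ∈ Finset.range (L + n),
            if k ≤ s ∧ s - k < L then (A.charpoly.coeff k) * (ξ (s - k) ⬝ᵥ U (j + s)) else 0)
          + ∑ k ∈ Finset.range (n + 1), ∑ s ∈ Finset.range (L + n),
            if s < k then
              (A.charpoly.coeff k) * ((η ᵥ* (A ^ (k - 1 - s) * B)) ⬝ᵥ U (j + s)) else 0 := by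
          rw [Finset.sum_comm (s := Finset.range (L + n)),
            Finset.sum_comm (s := Finset.range (L + n))]
      _ = ∑ k ∈ Finset.range (n + 1),
            ((∑ i ∈ Finset.range L, (A.charpoly.coeff k) * (ξ i ⬝ᵥ U (j + k + i)))
              + ∑ r ∈ Finset.range k,
                  (A.charpoly.coeff k) * ((η ᵥ* (A ^ (k - 1 - r) * B)) ⬝ᵥ U (j + r))) := by
          rw [← Finset.sum_add_distrib]
          refine Finset.sum_congr rfl fun k hk => ?_
          have hk' : k ≤ n := by
            have := Finset.mem_range.mp hk; omega
          congr 1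
          · have e : ∀ s ∈ Finset.range (L + n),
                (if k ≤ s ∧ s - k < L then (A.charpoly.coeff k) * (ξ (s - k) ⬝ᵥ U (j + s)) else 0)
                  = (if k ≤ s ∧ s - k < L then
                      (fun i => (A.charpoly.coeff k) * (ξ i ⬝ᵥ U (j + k + i))) (s - k) else 0) := by
              intro s _
              split_ifs with hcond
              · simp only
                rw [show j + s = j + k + (s - k) from by omega]
              · rfl
            rw [Finset.sum_congr rfl e]
            exact shift_sum (L + n) k L (by omega)
              (fun i => A.charpoly.coeff k * (ξ i ⬝ᵥ U (j + k + i)))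
          · exact lt_sum (L + n) k (by omega) _
      _ = ∑ k ∈ Finset.range (n + 1),
            -((A.charpoly.coeff k) * (η ⬝ᵥ ((A ^ k) *ᵥ X j))) := by
          refine Finset.sum_congr rfl fun k hk => ?_
          have hk' : k ≤ n := by
            have := Finset.mem_range.mp hk; omega
          have h8 := hRk k hk' j (by omega)
          rw [← Finset.mul_sum, ← Finset.mul_sum, h8]
          ring
      _ = 0 := by
          have h6 : ∑ k ∈ Finset.range (n + 1),
              (A.charpoly.coeff k) * (η ⬝ᵥ ((A ^ k) *ᵥ X j))
              = η ⬝ᵥ ((∑ k ∈ Finset.range (n + 1), (A.charpoly.coeff k) • A ^ k) *ᵥ X j) := by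
            rw [sum_mulVec', dot_sum]
            refine Finset.sum_congr rfl fun k _ => ?_
            rw [Matrix.smul_mulVec, dotProduct_smul, smul_eq_mul]
          rw [Finset.sum_neg_distrib, h6, hCH, Matrix.zero_mulVec, dotProduct_zero, neg_zero]
  have hw0 : ∀ s, s < L + n → w s = 0 := hPE w hwH
  have hxi : ∀ i, ξ i = 0 := by
    have main : ∀ d i, i < L → L - i ≤ d → ξ i = 0 := by
      intro d
      induction d with
      | zero => intro i hi h0; omega
      | succ d ih =>
        intro i hi _
        have hws := hw0 (n + i) (by omega)
        simp only [hwdef] at hws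
        have hS2 : (∑ k ∈ Finset.range (n + 1),
            if n + i < k then (A.charpoly.coeff k) • (η ᵥ* (A ^ (k - 1 - (n + i)) * B)) else 0)
              = 0 :=
          Finset.sum_eq_zero fun k hk => if_neg (by
            have := Finset.mem_range.mp hk; omega)
        have hS1 : (∑ k ∈ Finset.range (n + 1),
            if k ≤ n + i ∧ n + i - k < L then (A.charpoly.coeff k) • ξ (n + i - k) else 0)
              = ξ i := by
          rw [Finset.sum_range_succ]
          have z : (∑ k ∈ Finset.range n,
              if k ≤ n + i ∧ n + i - k < L then (A.charpoly.coeff k) • ξ (n + i - k) else 0)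
                = 0 :=
            Finset.sum_eq_zero fun k hk => by
              have hkn : k < n := Finset.mem_range.mp hk
              split_ifs with hcond
              · rw [ih (n + i - k) hcond.2 (by omega), smul_zero]
              · rfl
          rw [z, zero_add, if_pos ⟨by omega, by omega⟩,
            show n + i - n = i from by omega, hcn, one_smul]
        rw [hS1, hS2, add_zero] at hws
        exact hws
    intro i
    by_cases h : i < L
    · exact main L i h (by omega)
    · exact hsupp i (by omega)
  refine ⟨hxi, ?_⟩
  have heta : ∀ e, e < n → η ᵥ* (A ^ e * B) = 0 := by
    intro e
    induction e using Nat.strong_induction_on with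
    | _ e ih =>
      intro he
      have hws := hw0 (n - 1 - e) (by omega)
      simp only [hwdef] at hws
      have hS1 : (∑ k ∈ Finset.range (n + 1),
          if k ≤ n - 1 - e ∧ n - 1 - e - k < L then
            (A.charpoly.coeff k) • ξ (n - 1 - e - k) else 0) = 0 :=
        Finset.sum_eq_zero fun k _ => by
          split_ifs
          · rw [hxi, smul_zero]
          · rfl
      have hS2 : (∑ k ∈ Finset.range (n + 1),
          if n - 1 - e < k then
            (A.charpoly.coeff k) • (η ᵥ* (A ^ (k - 1 - (n - 1 - e)) * B)) else 0)
            = η ᵥ* (A ^ e * B) := by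
        rw [Finset.sum_range_succ]
        have z : (∑ k ∈ Finset.range n,
            if n - 1 - e < k then
              (A.charpoly.coeff k) • (η ᵥ* (A ^ (k - 1 - (n - 1 - e)) * B)) else 0) = 0 :=
          Finset.sum_eq_zero fun k hk => by
            have hkn : k < n := Finset.mem_range.mp hk
            split_ifs with hcond
            · rw [ih (k - 1 - (n - 1 - e)) (by omega) (by omega), smul_zero]
            · rfl
        rw [z, zero_add, if_pos (by omega),
          show n - 1 - (n - 1 - e) = e from by omega, hcn, one_smul]
      rw [hS1, hS2, zero_add] at hws
      exact hws
  have hctrb' : (Matrix.of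
      (fun (i : Fin n) (kj : Fin n × Fin m) => (A ^ (kj.1 : ℕ) * B) i kj.2)).rank = n := hctrb
  have hinj := inj_of_rank_eq_card (Matrix.of
      (fun (i : Fin n) (kj : Fin n × Fin m) => (A ^ (kj.1 : ℕ) * B) i kj.2))ᵀ
    (by rw [Matrix.rank_transpose, hctrb', Fintype.card_fin])
  refine (inj_iff_zero _).mp hinj η (funext fun kj => ?_)
  have h7 := congrFun (heta (kj.1 : ℕ) kj.1.isLt) kj.2
  simp only [Matrix.vecMul, dotProduct, Pi.zero_apply] at h7 ⊢
  simp only [Matrix.mulVec, dotProduct, Matrix.transpose_apply, Matrix.of_apply]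
  rw [← h7]
  exact Finset.sum_congr rfl fun i _ => mul_comm _ _

end Key


set_option maxHeartbeats 1000000 in
/-- For data from a minimal (controllable and observable) LTI system with `L ≥ lag`,
persistent excitation of order `L + n` implies the stacked Hankel matrix
`[H_L(u); H_L(y)]` has rank exactly `L·m + n`. -/
theorem stmt16 {n m p T L : ℕ}
    (A : Matrix (Fin n) (Fin n) ℝ) (B : Matrix (Fin n) (Fin m) ℝ)
    (C : Matrix (Fin p) (Fin n) ℝ) (D : Matrix (Fin p) (Fin m) ℝ)
    (hctrb : Controllable A B)
    (hobs : (ObsMat A C n).rank = n)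
    (hlagL : sInf {k : ℕ | (ObsMat A C k).rank = n} ≤ L)
    (u : Fin T → Fin m → ℝ) (y : Fin T → Fin p → ℝ)
    (htraj : IsTraj A B C D u y)
    (hL : L ≤ T) (hLn : L + n ≤ T)
    (hpe : PersistentlyExciting (L + n) hLn u) :
    (Matrix.fromRows (Hankel L hL u) (Hankel L hL y)).rank = L * m + n := by
  classical
  obtain ⟨x, hx, hy⟩ := htraj
  set U : ℕ → Fin m → ℝ := fun t => if h : t < T then u ⟨t, h⟩ else 0 with hUdef
  set X : ℕ → Fin n → ℝ := fun t => if h : t < T + 1 then x ⟨t, h⟩ else 0 with hXdef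
  set Y : ℕ → Fin p → ℝ := fun t => if h : t < T then y ⟨t, h⟩ else 0 with hYdef
  have hdyn : ∀ t, t < T → X (t + 1) = A *ᵥ X t + B *ᵥ U t := by
    intro t ht
    have h1 := hx ⟨t, ht⟩
    show (if h : t + 1 < T + 1 then x ⟨t + 1, h⟩ else 0)
      = A *ᵥ (if h : t < T + 1 then x ⟨t, h⟩ else 0) + B *ᵥ (if h : t < T then u ⟨t, h⟩ else 0)
    rw [dif_pos (Nat.succ_lt_succ ht), dif_pos (Nat.lt_succ_of_lt ht), dif_pos ht]
    exact h1
  have hout : ∀ t, t < T → Y t = C *ᵥ X t + D *ᵥ U t := by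
    intro t ht
    have h1 := hy ⟨t, ht⟩
    show (if h : t < T then y ⟨t, h⟩ else 0)
      = C *ᵥ (if h : t < T + 1 then x ⟨t, h⟩ else 0) + D *ᵥ (if h : t < T then u ⟨t, h⟩ else 0)
    rw [dif_pos ht, dif_pos (Nat.lt_succ_of_lt ht), dif_pos ht]
    exact h1
  have hXf := state_formula A B U X hdyn
  have hYf : ∀ i t, t + i < T →
      Y (t + i) = (C * A ^ i) *ᵥ X t
        + (∑ r ∈ Finset.range i, (C * (A ^ (i - 1 - r) * B)) *ᵥ U (t + r))
        + D *ᵥ U (t + i) := by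
    intro i t h
    rw [hout (t + i) h, hXf i t (by omega), Matrix.mulVec_add, mulVec_sum',
      Matrix.mulVec_mulVec]
    congr 2
    exact Finset.sum_congr rfl fun r _ => Matrix.mulVec_mulVec _ C _
  -- Hankel entries
  have hHU : ∀ (ik : Fin L × Fin m) (j : Fin (T - L + 1)),
      Hankel L hL u ik j = U ((ik.1 : ℕ) + (j : ℕ)) ik.2 := by
    intro ik j
    have h1 : (ik.1 : ℕ) + (j : ℕ) < T := by
      have := ik.1.isLt; have := j.isLt; omega
    show u _ ik.2 = (if h : (ik.1 : ℕ) + (j : ℕ) < T then u ⟨_, h⟩ else 0) ik.2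
    rw [dif_pos h1]
  have hHU' : ∀ (ik : Fin (L + n) × Fin m) (j : Fin (T - (L + n) + 1)),
      Hankel (L + n) hLn u ik j = U ((ik.1 : ℕ) + (j : ℕ)) ik.2 := by
    intro ik j
    have h1 : (ik.1 : ℕ) + (j : ℕ) < T := by
      have := ik.1.isLt; have := j.isLt; omega
    show u _ ik.2 = (if h : (ik.1 : ℕ) + (j : ℕ) < T then u ⟨_, h⟩ else 0) ik.2
    rw [dif_pos h1]
  have hHY : ∀ (iq : Fin L × Fin p) (j : Fin (T - L + 1)),
      Hankel L hL y iq j = Y ((iq.1 : ℕ) + (j : ℕ)) iq.2 := by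
    intro iq j
    have h1 : (iq.1 : ℕ) + (j : ℕ) < T := by
      have := iq.1.isLt; have := j.isLt; omega
    show y _ iq.2 = (if h : (iq.1 : ℕ) + (j : ℕ) < T then y ⟨_, h⟩ else 0) iq.2
    rw [dif_pos h1]
  -- persistent excitation, kernel form
  have hPEker : ∀ wv : ℕ → Fin m → ℝ,
      (∀ j, j + (L + n) ≤ T → ∑ s ∈ Finset.range (L + n), wv s ⬝ᵥ U (j + s) = 0) →
      ∀ s, s < L + n → wv s = 0 := by
    intro wv hwv s hs
    have hpe' : (Hankel (L + n) hLn u).rank = (L + n) * m := hpe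
    have hinj := inj_of_rank_eq_card (Hankel (L + n) hLn u)ᵀ
      (by rw [Matrix.rank_transpose, hpe']; simp)
    have hz : (Hankel (L + n) hLn u)ᵀ *ᵥ (fun sk : Fin (L + n) × Fin m => wv (sk.1 : ℕ) sk.2)
        = 0 := by
      funext j
      simp only [Matrix.mulVec, dotProduct, Matrix.transpose_apply, Pi.zero_apply]
      calc ∑ sk : Fin (L + n) × Fin m,
            Hankel (L + n) hLn u sk j * wv (sk.1 : ℕ) sk.2
          = ∑ s : Fin (L + n), ∑ k : Fin m,
              Hankel (L + n) hLn u (s, k) j * wv (s : ℕ) k := by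
            rw [Fintype.sum_prod_type]
        _ = ∑ s : Fin (L + n), wv (s : ℕ) ⬝ᵥ U ((j : ℕ) + (s : ℕ)) := by
            refine Finset.sum_congr rfl fun s _ => ?_
            simp only [dotProduct]
            refine Finset.sum_congr rfl fun k _ => ?_
            rw [hHU' (s, k) j, Nat.add_comm (s : ℕ) (j : ℕ)]
            exact mul_comm _ _
        _ = ∑ s ∈ Finset.range (L + n), wv s ⬝ᵥ U ((j : ℕ) + s) :=
            Fin.sum_univ_eq_sum_range (fun s => wv s ⬝ᵥ U ((j : ℕ) + s)) (L + n)
        _ = 0 := hwv _ (by have := j.isLt; omega)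
    have h0 := (inj_iff_zero _).mp hinj _ hz
    funext k
    exact congrFun h0 (⟨s, hs⟩, k)
  -- full row rank of the [H_L(u); X] matrix
  set Nmat : Matrix ((Fin L × Fin m) ⊕ Fin n) (Fin (T - L + 1)) ℝ :=
    Matrix.fromRows (Hankel L hL u)
      (Matrix.of fun (q : Fin n) (j : Fin (T - L + 1)) => X (j : ℕ) q) with hNdef
  have hNrank : Nmat.rank = L * m + n := by
    have hinjN : ∀ v, Nmatᵀ *ᵥ v = 0 → v = 0 := by
      intro v hv
      set ξ : ℕ → Fin m → ℝ :=
        fun i => if h : i < L then (fun k => v (Sum.inl (⟨i, h⟩, k))) else 0 with hxidef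
      have hsupp : ∀ i, L ≤ i → ξ i = 0 := by
        intro i hi
        simp only [hxidef]
        rw [dif_neg (by omega)]
      have hker : ∀ j, j + L ≤ T →
          (∑ i ∈ Finset.range L, ξ i ⬝ᵥ U (j + i)) + (fun q => v (Sum.inr q)) ⬝ᵥ X j = 0 := by
        intro j hj
        have h5 := congrFun hv (⟨j, by omega⟩ : Fin (T - L + 1))
        simp only [Matrix.mulVec, dotProduct, Matrix.transpose_apply, Pi.zero_apply] at h5
        rw [← h5, Fintype.sum_sum_type]
        congr 1
        · calc ∑ i ∈ Finset.range L, ξ i ⬝ᵥ U (j + i)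
              = ∑ i : Fin L, ξ (i : ℕ) ⬝ᵥ U (j + (i : ℕ)) :=
                (Fin.sum_univ_eq_sum_range (fun i => ξ i ⬝ᵥ U (j + i)) L).symm
            _ = ∑ ik : Fin L × Fin m,
                  Nmat (Sum.inl ik) (⟨j, by omega⟩ : Fin (T - L + 1)) * v (Sum.inl ik) := by
                rw [Fintype.sum_prod_type]
                refine Finset.sum_congr rfl fun i _ => ?_
                simp only [dotProduct, hxidef]
                rw [dif_pos i.isLt]
                refine Finset.sum_congr rfl fun k _ => ?_
                have hN1 : Nmat (Sum.inl (i, k)) (⟨j, by omega⟩ : Fin (T - L + 1))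
                    = U (j + (i : ℕ)) k := by
                  rw [hNdef, Matrix.fromRows_apply_inl, hHU (i, k) ⟨j, by omega⟩,
                    Nat.add_comm]
                rw [hN1, Fin.eta]
                exact mul_comm _ _
        · simp only [dotProduct]
          refine Finset.sum_congr rfl fun q _ => ?_
          have hN2 : Nmat (Sum.inr q) (⟨j, by omega⟩ : Fin (T - L + 1)) = X j q := by
            rw [hNdef, Matrix.fromRows_apply_inr]
            rfl
          rw [hN2]
          exact mul_comm _ _
      obtain ⟨h1, h2⟩ := willems_key A B hctrb U X hdyn hLn hPEker ξ
        (fun q => v (Sum.inr q)) hsupp hker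
      funext r
      cases r with
      | inl ik =>
        have h3 := congrFun (h1 (ik.1 : ℕ)) ik.2
        simp only [hxidef] at h3
        rw [dif_pos ik.1.isLt] at h3
        simpa [Fin.eta] using h3
      | inr q => exact congrFun h2 q
    rw [← Matrix.rank_transpose, rank_eq_card_of_inj _ ((inj_iff_zero _).mpr hinjN)]
    simp [Fintype.card_sum, Fintype.card_prod, Nat.mul_comm]
  -- observability: injectivity of ObsMat A C L
  have hSne : ({k : ℕ | (ObsMat A C k).rank = n}).Nonempty := ⟨n, hobs⟩
  have hlagrank : (ObsMat A C (sInf {k : ℕ | (ObsMat A C k).rank = n})).rank = n :=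
    Nat.sInf_mem hSne
  have hOinj : ∀ v : Fin n → ℝ, (ObsMat A C L) *ᵥ v = 0 → v = 0 := by
    intro v hv
    have hlaginj := inj_of_rank_eq_card (ObsMat A C (sInf {k : ℕ | (ObsMat A C k).rank = n}))
      (by rw [hlagrank, Fintype.card_fin])
    refine (inj_iff_zero _).mp hlaginj v (funext fun iq => ?_)
    have hiq : (iq.1 : ℕ) < L := lt_of_lt_of_le iq.1.isLt hlagL
    have h2 := congrFun hv (⟨⟨(iq.1 : ℕ), hiq⟩, iq.2⟩ : Fin L × Fin p)
    simp only [Matrix.mulVec, dotProduct, ObsMat, Pi.zero_apply] at h2 ⊢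
    exact h2
  -- Toeplitz block
  set TL : Matrix (Fin L × Fin p) (Fin L × Fin m) ℝ := Matrix.of fun iq jk =>
    if (jk.1 : ℕ) < (iq.1 : ℕ) then
      (C * (A ^ ((iq.1 : ℕ) - 1 - (jk.1 : ℕ)) * B)) iq.2 jk.2
    else if (jk.1 : ℕ) = (iq.1 : ℕ) then D iq.2 jk.2 else 0 with hTLdef
  have hfact : Matrix.fromRows (Hankel L hL u) (Hankel L hL y)
      = Matrix.fromBlocks (1 : Matrix (Fin L × Fin m) (Fin L × Fin m) ℝ) 0
          TL (ObsMat A C L) * Nmat := by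
    rw [hNdef, Matrix.fromBlocks_mul_fromRows]
    apply Matrix.ext
    intro r j
    cases r with
    | inl ik =>
      rw [Matrix.fromRows_apply_inl, Matrix.fromRows_apply_inl, Matrix.one_mul,
        Matrix.zero_mul, add_zero]
    | inr iq =>
      rw [Matrix.fromRows_apply_inr, Matrix.fromRows_apply_inr]
      have hiqj : (j : ℕ) + (iq.1 : ℕ) < T := by
        have := iq.1.isLt; have := j.isLt; omega
      have hYj := hYf (iq.1 : ℕ) (j : ℕ) hiqj
      have hLHS : Hankel L hL y iq j = Y ((j : ℕ) + (iq.1 : ℕ)) iq.2 := by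
        rw [hHY iq j, Nat.add_comm]
      rw [hLHS, hYj, Matrix.add_apply, Matrix.mul_apply, Matrix.mul_apply]
      have hA : (∑ q' : Fin n, ObsMat A C L iq q' * Matrix.of
            (fun (q : Fin n) (j' : Fin (T - L + 1)) => X (j' : ℕ) q) q' j)
          = ((C * A ^ (iq.1 : ℕ)) *ᵥ X (j : ℕ)) iq.2 := by
        simp only [Matrix.mulVec, dotProduct, ObsMat, Matrix.of_apply]
      have hB : (∑ jk : Fin L × Fin m, TL iq jk * Hankel L hL u jk j)
          = (∑ r ∈ Finset.range (iq.1 : ℕ),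
              ((C * (A ^ ((iq.1 : ℕ) - 1 - r) * B)) *ᵥ U ((j : ℕ) + r)) iq.2)
            + (D *ᵥ U ((j : ℕ) + (iq.1 : ℕ))) iq.2 := by
        rw [Fintype.sum_prod_type]
        have e6 : ∀ i' : Fin L, (∑ k : Fin m, TL iq (i', k) * Hankel L hL u (i', k) j)
            = (fun s => if s < (iq.1 : ℕ) then
                ((C * (A ^ ((iq.1 : ℕ) - 1 - s) * B)) *ᵥ U ((j : ℕ) + s)) iq.2
              else if s = (iq.1 : ℕ) then
                (D *ᵥ U ((j : ℕ) + (iq.1 : ℕ))) iq.2 else 0) (i' : ℕ) := by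
          intro i'
          simp only [hTLdef, Matrix.of_apply]
          split_ifs with hc1 hc2
          · simp only [Matrix.mulVec, dotProduct]
            refine Finset.sum_congr rfl fun k _ => ?_
            rw [hHU (i', k) j, Nat.add_comm (i' : ℕ) (j : ℕ)]
          · simp only [Matrix.mulVec, dotProduct]
            refine Finset.sum_congr rfl fun k _ => ?_
            rw [hHU (i', k) j, Nat.add_comm (i' : ℕ) (j : ℕ), hc2]
          · exact Finset.sum_eq_zero fun k _ => zero_mul _
        rw [Finset.sum_congr rfl fun i' _ => e6 i']
        exact (Fin.sum_univ_eq_sum_range (fun s => if s < (iq.1 : ℕ) then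
            ((C * (A ^ ((iq.1 : ℕ) - 1 - s) * B)) *ᵥ U ((j : ℕ) + s)) iq.2
          else if s = (iq.1 : ℕ) then
            (D *ᵥ U ((j : ℕ) + (iq.1 : ℕ))) iq.2 else 0) L).trans
          (ite_chain_sum L (iq.1 : ℕ) iq.1.isLt _ _)
      rw [Pi.add_apply, Pi.add_apply, Finset.sum_apply, hA, hB]
      ring
  have hMinj : Function.Injective
      (Matrix.fromBlocks (1 : Matrix (Fin L × Fin m) (Fin L × Fin m) ℝ) 0
        TL (ObsMat A C L)).mulVecLin := by
    refine (inj_iff_zero _).mpr fun v hv => ?_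
    rw [Matrix.fromBlocks_mulVec] at hv
    have h1 : (1 : Matrix (Fin L × Fin m) (Fin L × Fin m) ℝ) *ᵥ (v ∘ Sum.inl)
        + (0 : Matrix (Fin L × Fin m) (Fin n) ℝ) *ᵥ (v ∘ Sum.inr) = 0 := by
      funext a; exact congrFun hv (Sum.inl a)
    rw [Matrix.one_mulVec, Matrix.zero_mulVec, add_zero] at h1
    have h2 : TL *ᵥ (v ∘ Sum.inl) + (ObsMat A C L) *ᵥ (v ∘ Sum.inr) = 0 := by
      funext a; exact congrFun hv (Sum.inr a)
    rw [h1, Matrix.mulVec_zero, zero_add] at h2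
    have h3 := hOinj _ h2
    funext r
    cases r with
    | inl a => exact congrFun h1 a
    | inr a => exact congrFun h3 a
  rw [hfact, rank_mul_of_inj _ _ hMinj, hNrank]
end
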